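/- Let f > 0, b₀ > 0 and 0 < b₁ ≤ b₂, and define R : (0,1) → ℝ by R(α) = (1−α)·log₂(1 + f·min(1 − αb₁/(1−α+αb₂), b₀α/(1−α))). Let α* be the unique point of (0,1) satisfying ln(1 + f·b₀·α*/(1−α*)) = f·b₀/(1−α* + f·b₀·α*), and let α₀ = ((b₂−b₁−b₀) + √(b₀² + (b₂−b₁)² + 2b₀(b₁+b₂))) / (2b₀b₂). Then R attains its maximum over (0,1) at the point min(α*, α₀/(1+α₀)). -/

import Mathlib

/-!
With `c = f b₀`, on `α ≤ β := α₀ / (1 + α₀)` the minimum is the hop branch `b₀α/(1-α)` and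
`R(α) log 2 = (1-α) log (1 + cα/(1-α))`. Its derivative `c/(1-α+cα) - log (1 + cα/(1-α))` has
derivative `-c²/((1-α)(1-α+cα)²) < 0`, so `R` increases up to the stationary point `α*` and
decreases after it. On `α ≥ β` the minimum is the loop branch, and there both `1 - α` and the
loop SNR decrease. The branches cross at `β`: in `x = α/(1-α)` the crossing equation is the
quadratic `b₀b₂x² + (b₀+b₁-b₂)x = 1`, whose positive root is `α₀`.
-/

open Real Set

lemma quadratic_pos_root {p q : ℝ} (hq : 0 < q) :
    0 < (-p + √(p ^ 2 + 4 * q)) / (2 * q) ∧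
      q * ((-p + √(p ^ 2 + 4 * q)) / (2 * q)) ^ 2 + p * ((-p + √(p ^ 2 + 4 * q)) / (2 * q)) =
        1 := by
  have hs : √(p ^ 2 + 4 * q) ^ 2 = p ^ 2 + 4 * q := sq_sqrt (by positivity)
  have hs₀ := sqrt_nonneg (p ^ 2 + 4 * q)
  set s := √(p ^ 2 + 4 * q)
  constructor
  · have : p < s := by nlinarith
    exact div_pos (by linarith) (by positivity)
  · field_simp
    linear_combination hs

noncomputable def hopSNR (b₀ α : ℝ) : ℝ := b₀ * α / (1 - α)

noncomputable def loopSNR (b₁ b₂ α : ℝ) : ℝ := 1 - α * b₁ / (1 - α + α * b₂)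

noncomputable def throughput (f b₀ b₁ b₂ α : ℝ) : ℝ :=
  (1 - α) * logb 2 (1 + f * min (loopSNR b₁ b₂ α) (hopSNR b₀ α))

/-- `log 2` times the throughput on the hop branch, with `c = f b₀`. -/
noncomputable def hopRate (c α : ℝ) : ℝ := (1 - α) * log (1 + c * α / (1 - α))

noncomputable def hopRateDeriv (c α : ℝ) : ℝ :=
  c / (1 - α + c * α) - log (1 + c * α / (1 - α))

section SNR

variable {b₀ b₁ b₂ : ℝ}

lemma monotoneOn_hopSNR (hb₀ : 0 ≤ b₀) : MonotoneOn (hopSNR b₀) (Iio 1) := by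
  intro x hx y hy hxy
  have hx : x < 1 := hx
  have hy : y < 1 := hy
  unfold hopSNR
  rw [div_le_div_iff₀ (by linarith) (by linarith)]
  nlinarith

lemma one_sub_add_mul_pos (hb₂ : 0 ≤ b₂) {α : ℝ} (hα : α ∈ Ico 0 1) : 0 < 1 - α + α * b₂ := by
  nlinarith [hα.1, hα.2]

lemma antitoneOn_loopSNR (hb₁ : 0 ≤ b₁) (hb₂ : 0 ≤ b₂) :
    AntitoneOn (loopSNR b₁ b₂) (Ico 0 1) := by
  intro x hx y hy hxy
  have := (div_le_div_iff₀ (one_sub_add_mul_pos hb₂ hx) (one_sub_add_mul_pos hb₂ hy)).mpr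
    (show x * b₁ * (1 - y + y * b₂) ≤ y * b₁ * (1 - x + x * b₂) by nlinarith)
  unfold loopSNR
  linarith

lemma loopSNR_nonneg (hb₁₂ : b₁ ≤ b₂) (hb₂ : 0 ≤ b₂) {α : ℝ} (hα : α ∈ Ico 0 1) :
    0 ≤ loopSNR b₁ b₂ α := by
  have : α * b₁ / (1 - α + α * b₂) ≤ 1 := by
    rw [div_le_one (one_sub_add_mul_pos hb₂ hα)]
    nlinarith [hα.1, hα.2]
  unfold loopSNR
  linarith

lemma loopSNR_eq_hopSNR {x : ℝ} (hb₂ : 0 ≤ b₂) (hx : 0 < x)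
    (hroot : b₀ * b₂ * x ^ 2 + (b₀ + b₁ - b₂) * x = 1) :
    loopSNR b₁ b₂ (x / (1 + x)) = hopSNR b₀ (x / (1 + x)) := by
  have h₁ : 1 - x / (1 + x) = 1 / (1 + x) := by field_simp; ring
  have h₂ : 1 - x / (1 + x) + x / (1 + x) * b₂ = (1 + x * b₂) / (1 + x) := by field_simp; ring
  have : 0 < 1 + x * b₂ := by positivity
  unfold loopSNR hopSNR
  rw [h₂, h₁]
  field_simp
  linear_combination -hroot

end SNR

section HopRate

variable {c α : ℝ}

lemma hasDerivAt_log_one_add_div (hc : 0 < c) (hα : α ∈ Ioo 0 1) :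
    HasDerivAt (fun α => log (1 + c * α / (1 - α))) (c / ((1 - α) * (1 - α + c * α))) α := by
  have h₁ : 0 < 1 - α := by linarith [hα.2]
  have h₂ : 0 < 1 + c * α / (1 - α) := by have := hα.1; positivity
  have hq : HasDerivAt (fun α => 1 + c * α / (1 - α)) (c / (1 - α) ^ 2) α := by
    refine ((((hasDerivAt_id α).const_mul c).div ((hasDerivAt_id α).const_sub 1)
      h₁.ne').const_add 1).congr_deriv ?_
    simp only [id]
    field_simp
    ring
  refine (hq.log h₂.ne').congr_deriv ?_
  field_simp

lemma hasDerivAt_hopRate (hc : 0 < c) (hα : α ∈ Ioo 0 1) :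
    HasDerivAt (hopRate c) (hopRateDeriv c α) α := by
  have h₁ : 0 < 1 - α := by linarith [hα.2]
  have h₂ : 0 < 1 - α + c * α := by have := hα.1; positivity
  refine (((hasDerivAt_id α).const_sub 1).mul
    (hasDerivAt_log_one_add_div hc hα)).congr_deriv ?_
  simp only [hopRateDeriv, id]
  field_simp
  ring

lemma hasDerivAt_hopRateDeriv (hc : 0 < c) (hα : α ∈ Ioo 0 1) :
    HasDerivAt (hopRateDeriv c) (-c ^ 2 / ((1 - α) * (1 - α + c * α) ^ 2)) α := by
  have h₁ : 0 < 1 - α := by linarith [hα.2]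
  have h₂ : 0 < 1 - α + c * α := by have := hα.1; positivity
  have hd : HasDerivAt (fun α => 1 - α + c * α) (c - 1) α := by
    refine (((hasDerivAt_id α).const_sub 1).add
      ((hasDerivAt_id α).const_mul c)).congr_deriv ?_
    ring
  refine (((hasDerivAt_const α c).div hd h₂.ne').sub
    (hasDerivAt_log_one_add_div hc hα)).congr_deriv ?_
  field_simp
  ring

lemma strictAntiOn_hopRateDeriv (hc : 0 < c) : StrictAntiOn (hopRateDeriv c) (Ioo 0 1) := by
  refine strictAntiOn_of_hasDerivWithinAt_neg (convex_Ioo 0 1)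
    (f' := fun x => -c ^ 2 / ((1 - x) * (1 - x + c * x) ^ 2))
    (fun x hx => (hasDerivAt_hopRateDeriv hc hx).continuousAt.continuousWithinAt)
    (fun x hx => ?_) (fun x hx => ?_) <;> rw [interior_Ioo] at hx
  · exact (hasDerivAt_hopRateDeriv hc hx).hasDerivWithinAt
  · have h₁ : 0 < 1 - x := by linarith [hx.2]
    have h₂ : 0 < 1 - x + c * x := by have := hx.1; positivity
    exact div_neg_of_neg_of_pos (by nlinarith) (by positivity)

variable {αs : ℝ}

lemma monotoneOn_hopRate (hc : 0 < c) (hαs : αs ∈ Ioo 0 1) (hstat : hopRateDeriv c αs = 0) :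
    MonotoneOn (hopRate c) (Ioc 0 αs) := by
  have hsub : Ioc 0 αs ⊆ Ioo 0 1 := Ioc_subset_Ioo_right hαs.2
  refine monotoneOn_of_hasDerivWithinAt_nonneg (convex_Ioc 0 αs) (f' := hopRateDeriv c)
    (fun x hx => (hasDerivAt_hopRate hc (hsub hx)).continuousAt.continuousWithinAt)
    (fun x hx => ?_) (fun x hx => ?_) <;> rw [interior_Ioc] at hx
  · exact (hasDerivAt_hopRate hc (hsub (Ioo_subset_Ioc_self hx))).hasDerivWithinAt
  · rw [← hstat]
    exact (strictAntiOn_hopRateDeriv hc (hsub (Ioo_subset_Ioc_self hx)) hαs hx.2).le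

lemma antitoneOn_hopRate (hc : 0 < c) (hαs : αs ∈ Ioo 0 1) (hstat : hopRateDeriv c αs = 0) :
    AntitoneOn (hopRate c) (Ico αs 1) := by
  have hsub : Ico αs 1 ⊆ Ioo 0 1 := Ico_subset_Ioo_left hαs.1
  refine antitoneOn_of_hasDerivWithinAt_nonpos (convex_Ico αs 1) (f' := hopRateDeriv c)
    (fun x hx => (hasDerivAt_hopRate hc (hsub hx)).continuousAt.continuousWithinAt)
    (fun x hx => ?_) (fun x hx => ?_) <;> rw [interior_Ico] at hx
  · exact (hasDerivAt_hopRate hc (hsub (Ioo_subset_Ico_self hx))).hasDerivWithinAt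
  · rw [← hstat]
    exact (strictAntiOn_hopRateDeriv hc hαs (hsub (Ioo_subset_Ico_self hx)) hx.1).le

end HopRate

lemma le_apply_min_of_monotoneOn_of_antitoneOn {α β : Type*} [LinearOrder α] [Preorder β]
    {f : α → β} {a b m x y : α} (hmono : MonotoneOn f (Ioc a m))
    (hanti : AntitoneOn f (Ico m b)) (hm : m ∈ Ioo a b) (hx : x ∈ Ioo a b) (hxy : x ≤ y) :
    f x ≤ f (min m y) := by
  rcases le_total m y with hmy | hym
  · rw [min_eq_left hmy]
    rcases le_total x m with hxm | hmx
    · exact hmono ⟨hx.1, hxm⟩ ⟨hm.1, le_rfl⟩ hxm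
    · exact hanti ⟨le_rfl, hm.2⟩ ⟨hmx, hx.2⟩ hmx
  · rw [min_eq_right hym]
    exact hmono ⟨hx.1, hxy.trans hym⟩ ⟨hx.1.trans_le hxy, hym⟩ hxy

section Throughput

variable {f b₀ b₁ b₂ β α : ℝ}

lemma throughput_eq_hopRate (hb₀ : 0 ≤ b₀) (hb₁ : 0 ≤ b₁) (hb₂ : 0 ≤ b₂) (hβ : β < 1)
    (hcross : loopSNR b₁ b₂ β = hopSNR b₀ β) (hα : 0 < α) (hαβ : α ≤ β) :
    throughput f b₀ b₁ b₂ α = hopRate (f * b₀) α / log 2 := by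
  have hα₁ : α < 1 := hαβ.trans_lt hβ
  have hmin : min (loopSNR b₁ b₂ α) (hopSNR b₀ α) = hopSNR b₀ α := by
    refine min_eq_right ?_
    calc hopSNR b₀ α ≤ hopSNR b₀ β := monotoneOn_hopSNR hb₀ hα₁ hβ hαβ
      _ = loopSNR b₁ b₂ β := hcross.symm
      _ ≤ loopSNR b₁ b₂ α :=
        antitoneOn_loopSNR hb₁ hb₂ ⟨hα.le, hα₁⟩ ⟨(hα.trans_le hαβ).le, hβ⟩ hαβ
  rw [throughput, hmin, hopSNR, hopRate, logb, mul_div_assoc', mul_div_assoc', mul_assoc]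

lemma antitoneOn_throughput (hf : 0 ≤ f) (hb₀ : 0 ≤ b₀) (hb₁ : 0 ≤ b₁) (hb₁₂ : b₁ ≤ b₂)
    (hβ : 0 < β) (hcross : loopSNR b₁ b₂ β = hopSNR b₀ β) :
    AntitoneOn (throughput f b₀ b₁ b₂) (Ico β 1) := by
  have hb₂ : 0 ≤ b₂ := hb₁.trans hb₁₂
  have hloop : ∀ α ∈ Ico β 1, min (loopSNR b₁ b₂ α) (hopSNR b₀ α) = loopSNR b₁ b₂ α := by
    intro α hα
    refine min_eq_left ?_
    calc loopSNR b₁ b₂ α ≤ loopSNR b₁ b₂ β :=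
          antitoneOn_loopSNR hb₁ hb₂ ⟨hβ.le, hα.1.trans_lt hα.2⟩ ⟨hβ.le.trans hα.1, hα.2⟩ hα.1
      _ = hopSNR b₀ β := hcross
      _ ≤ hopSNR b₀ α := monotoneOn_hopSNR hb₀ (hα.1.trans_lt hα.2) hα.2 hα.1
  intro x hx y hy hxy
  have hx₀ : x ∈ Ico 0 1 := ⟨hβ.le.trans hx.1, hx.2⟩
  have hy₀ : y ∈ Ico 0 1 := ⟨hβ.le.trans hy.1, hy.2⟩
  have hfy := mul_nonneg hf (loopSNR_nonneg hb₁₂ hb₂ hy₀)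
  rw [throughput, throughput, hloop x hx, hloop y hy]
  refine mul_le_mul (by linarith) (logb_le_logb_of_le one_lt_two (by linarith) ?_)
    (logb_nonneg one_lt_two (by linarith)) (by linarith [hx.2])
  gcongr
  exact antitoneOn_loopSNR hb₁ hb₂ hx₀ hy₀ hxy

end Throughput

theorem stmt_14_general (f b₀ b₁ b₂ : ℝ) (hf : 0 < f) (hb₀ : 0 < b₀) (hb₁ : 0 < b₁)
    (hb₁₂ : b₁ ≤ b₂)
    (αstar : ℝ) (hαstar : αstar ∈ Set.Ioo (0 : ℝ) 1)
    (hstat : Real.log (1 + f * b₀ * αstar / (1 - αstar)) =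
      f * b₀ / (1 - αstar + f * b₀ * αstar))
    (α₀ : ℝ)
    (hα₀ : α₀ = ((b₂ - b₁ - b₀) +
        Real.sqrt (b₀ ^ 2 + (b₂ - b₁) ^ 2 + 2 * b₀ * (b₁ + b₂))) / (2 * b₀ * b₂)) :
    min αstar (α₀ / (1 + α₀)) ∈ Set.Ioo (0 : ℝ) 1 ∧
    ∀ α ∈ Set.Ioo (0 : ℝ) 1,
      (1 - α) * Real.logb 2
          (1 + f * min (1 - α * b₁ / (1 - α + α * b₂)) (b₀ * α / (1 - α))) ≤
        (1 - min αstar (α₀ / (1 + α₀))) * Real.logb 2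
          (1 + f * min
            (1 - min αstar (α₀ / (1 + α₀)) * b₁ /
              (1 - min αstar (α₀ / (1 + α₀)) + min αstar (α₀ / (1 + α₀)) * b₂))
            (b₀ * min αstar (α₀ / (1 + α₀)) / (1 - min αstar (α₀ / (1 + α₀))))) := by
  have hb₂ : 0 < b₂ := hb₁.trans_le hb₁₂
  have hc : 0 < f * b₀ := mul_pos hf hb₀
  obtain ⟨hα₀_pos, hα₀_root⟩ : 0 < α₀ ∧ b₀ * b₂ * α₀ ^ 2 + (b₀ + b₁ - b₂) * α₀ = 1 := by
    have hdisc : b₀ ^ 2 + (b₂ - b₁) ^ 2 + 2 * b₀ * (b₁ + b₂) =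
        (b₀ + b₁ - b₂) ^ 2 + 4 * (b₀ * b₂) := by ring
    rw [hα₀, hdisc, show b₂ - b₁ - b₀ = -(b₀ + b₁ - b₂) by ring, mul_assoc]
    exact quadratic_pos_root (mul_pos hb₀ hb₂)
  set β := α₀ / (1 + α₀)
  have hβ : β ∈ Ioo 0 1 := ⟨by positivity, (div_lt_one (by positivity)).mpr (lt_one_add α₀)⟩
  have hcross : loopSNR b₁ b₂ β = hopSNR b₀ β := loopSNR_eq_hopSNR hb₂.le hα₀_pos hα₀_root
  have hslope : hopRateDeriv (f * b₀) αstar = 0 := sub_eq_zero.mpr hstat.symm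
  have hleft : ∀ α ∈ Ioo 0 1, α ≤ β →
      throughput f b₀ b₁ b₂ α ≤ throughput f b₀ b₁ b₂ (min αstar β) := by
    intro α hα hαβ
    rw [throughput_eq_hopRate hb₀.le hb₁.le hb₂.le hβ.2 hcross hα.1 hαβ,
      throughput_eq_hopRate hb₀.le hb₁.le hb₂.le hβ.2 hcross (lt_min hαstar.1 hβ.1)
        (min_le_right _ _)]
    exact div_le_div_of_nonneg_right (le_apply_min_of_monotoneOn_of_antitoneOn
      (monotoneOn_hopRate hc hαstar hslope) (antitoneOn_hopRate hc hαstar hslope) hαstar hα hαβ)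
      (log_nonneg one_le_two)
  refine ⟨⟨lt_min hαstar.1 hβ.1, (min_le_right _ _).trans_lt hβ.2⟩, fun α hα => ?_⟩
  rcases le_total α β with hαβ | hβα
  · exact hleft α hα hαβ
  · exact (antitoneOn_throughput hf.le hb₀.le hb₁.le hb₁₂ hβ.1 hcross ⟨le_rfl, hβ.2⟩
      ⟨hβα, hα.2⟩ hβα).trans (hleft β hβ le_rfl)

/-- Proposition 3: the instantaneous throughput of the optimum scheme
`R(α) = (1−α)·log₂(1 + f·min(1 − αb₁/(1−α+αb₂), b₀α/(1−α)))` attains its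
maximum over `(0,1)` at `min(α*, α₀/(1+α₀))`, where `α*` is the stationary
point of the concave branch and `α₀` the branch-switching root. -/
theorem stmt_14 (f b₀ b₁ b₂ : ℝ) (hf : 0 < f) (hb₀ : 0 < b₀) (hb₁ : 0 < b₁)
    (hb₁₂ : b₁ ≤ b₂)
    (αstar : ℝ) (hαstar : αstar ∈ Set.Ioo (0 : ℝ) 1)
    (hstat : Real.log (1 + f * b₀ * αstar / (1 - αstar)) =
      f * b₀ / (1 - αstar + f * b₀ * αstar))
    (huniq : ∀ α ∈ Set.Ioo (0 : ℝ) 1,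
      Real.log (1 + f * b₀ * α / (1 - α)) = f * b₀ / (1 - α + f * b₀ * α) → α = αstar)
    (α₀ : ℝ)
    (hα₀ : α₀ = ((b₂ - b₁ - b₀) +
        Real.sqrt (b₀ ^ 2 + (b₂ - b₁) ^ 2 + 2 * b₀ * (b₁ + b₂))) / (2 * b₀ * b₂)) :
    min αstar (α₀ / (1 + α₀)) ∈ Set.Ioo (0 : ℝ) 1 ∧
    ∀ α ∈ Set.Ioo (0 : ℝ) 1,
      (1 - α) * Real.logb 2
          (1 + f * min (1 - α * b₁ / (1 - α + α * b₂)) (b₀ * α / (1 - α))) ≤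
        (1 - min αstar (α₀ / (1 + α₀))) * Real.logb 2
          (1 + f * min
            (1 - min αstar (α₀ / (1 + α₀)) * b₁ /
              (1 - min αstar (α₀ / (1 + α₀)) + min αstar (α₀ / (1 + α₀)) * b₂))
            (b₀ * min αstar (α₀ / (1 + α₀)) / (1 - min αstar (α₀ / (1 + α₀))))) :=
  stmt_14_general f b₀ b₁ b₂ hf hb₀ hb₁ hb₁₂ αstar hαstar hstat α₀ hα₀
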